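/- The Laplace mechanism is ε-DP: if f : datasets → ℝ has sensitivity Δ (|f(D) − f(D')| ≤ Δ for all neighboring D, D'), then releasing f(D) + η, where η has Laplace density (ε/(2Δ)) · exp(−ε|x|/Δ), satisfies ε-differential privacy. -/

import Mathlib

open MeasureTheory ENNReal

/-- `M` is an `ε`-differentially private mechanism with respect to the
neighboring relation `neighbor`. -/
def IsDP {D X : Type*} [MeasurableSpace X] (neighbor : D → D → Prop)
    (M : D → Measure X) (ε : ℝ) : Prop :=
  ∀ d d', neighbor d d' → ∀ O : Set X, MeasurableSet O →
    M d O ≤ ENNReal.ofReal (Real.exp ε) * M d' O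

/-!
Translating noise with density `p` by `c` gives the density `x ↦ p (x - c)`. For the Laplace
density, moving the centre from `f d'` to `f d` changes `exp (-ε |x - c| / Δ)` by a factor of at
most `exp (ε |f d - f d'| / Δ) ≤ exp ε` (triangle inequality), and this pointwise bound on the
densities integrates to the bound on the probabilities of every event.
-/

section Translation

variable {G : Type*} [MeasurableSpace G] [AddGroup G] [MeasurableAdd G]
  (μ : Measure G) [μ.IsAddLeftInvariant]

theorem map_add_left_withDensity (p : G → ℝ≥0∞) (c : G) :
    (μ.withDensity p).map (c + ·) = μ.withDensity fun x => p (-c + x) := by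
  ext s hs
  rw [Measure.map_apply (measurable_const_add c) hs, withDensity_apply _ hs,
    withDensity_apply _ (measurable_const_add c hs)]
  simpa only [neg_add_cancel_left] using (measurePreserving_add_left μ c)
    |>.setLIntegral_comp_preimage_emb (measurableEmbedding_addLeft c) (fun x => p (-c + x)) s

theorem isDP_map_add_withDensity {D : Type*} (neighbor : D → D → Prop) (f : D → G)
    (p : G → ℝ≥0∞) (ε : ℝ)
    (hp : ∀ d d', neighbor d d' → ∀ x, p (-f d + x) ≤ .ofReal (Real.exp ε) * p (-f d' + x)) :
    IsDP neighbor (fun d => (μ.withDensity p).map (f d + ·)) ε := by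
  intro d d' hdd' O _
  dsimp only
  rw [map_add_left_withDensity, map_add_left_withDensity, ← smul_eq_mul, ← Measure.smul_apply,
    ← withDensity_smul' _ _ ofReal_ne_top]
  exact Measure.le_iff'.1 (withDensity_mono (ae_of_all _ (hp d d' hdd'))) O

end Translation

theorem exp_neg_mul_abs_sub_le {k : ℝ} (hk : 0 ≤ k) (x a b : ℝ) :
    Real.exp (-(k * |x - a|)) ≤ Real.exp (k * |a - b|) * Real.exp (-(k * |x - b|)) := by
  rw [← Real.exp_add, Real.exp_le_exp]
  have := mul_le_mul_of_nonneg_left (abs_sub_le x a b) hk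
  linarith

theorem laplace_mechanism_DP {D : Type*}
    (neighbor : D → D → Prop) (f : D → ℝ) (Δ ε : ℝ) (hΔ : 0 < Δ) (hε : 0 < ε)
    (hsens : ∀ d d', neighbor d d' → |f d - f d'| ≤ Δ)
    (η : Measure ℝ)
    (hη : η = volume.withDensity
      (fun x => ENNReal.ofReal ((ε / (2 * Δ)) * Real.exp (-(ε * |x|) / Δ)))) :
    IsDP neighbor (fun d => η.map (fun x => f d + x)) ε := by
  subst hη
  refine isDP_map_add_withDensity volume neighbor f _ ε fun d d' hdd' x => ?_
  have hk : 0 ≤ ε / Δ := by positivity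
  have hshift : Real.exp (ε / Δ * |f d - f d'|) ≤ Real.exp ε := by
    rw [Real.exp_le_exp, div_mul_eq_mul_div, div_le_iff₀ hΔ]
    exact mul_le_mul_of_nonneg_left (hsens d d' hdd') hε.le
  rw [← ENNReal.ofReal_mul (Real.exp_nonneg ε)]
  refine ENNReal.ofReal_le_ofReal ?_
  simp only [neg_div, mul_div_right_comm ε, neg_add_eq_sub]
  calc ε / (2 * Δ) * Real.exp (-(ε / Δ * |x - f d|))
      ≤ ε / (2 * Δ) * (Real.exp (ε / Δ * |f d - f d'|) * Real.exp (-(ε / Δ * |x - f d'|))) :=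
        mul_le_mul_of_nonneg_left (exp_neg_mul_abs_sub_le hk _ _ _) (by positivity)
    _ ≤ Real.exp ε * (ε / (2 * Δ) * Real.exp (-(ε / Δ * |x - f d'|))) := by
        rw [mul_left_comm]
        gcongr
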